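/- For the path graph on vertex set {-k,...,k} with double-symmetric positive edge weights and potential u ≥ 0 at the zero vertex, a positive ground state eigenvector u_0 of H = L_γ + u δ_0 is symmetric: u_0(v) = u_0(-v) for all v ∈ {-k,...,k}. -/

import Mathlib

/-!
The eigenvalue equation of a matrix whose entries vanish above the superdiagonal, and whose
superdiagonal entries do not vanish, is a recurrence determining an eigenvector from its first
entry, so all eigenspaces are lines. The reflection `v ↦ -v` commutes with `H`, hence
`u₀ ∘ rev = c • u₀`; reflecting twice gives `c² = 1`, and positivity of `u₀` forces `c = 1`.
-/

open Filter Real Matrix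

/-- Real version of the weighted Laplacian plus potential `u δ₀` on the path graph with
vertex set `{-k, …, k}` (encoded as `Fin (2*k+1)`, the vertex of index `i` being `i - k`):
`(H f)(v) = ∑_{w : |v-w|=1} γ v w (f v - f w) + u · [v = 0] · f v`. -/
noncomputable def pathHR (k : ℕ) (γ : ℤ → ℤ → ℝ) (u : ℝ) :
    Matrix (Fin (2 * k + 1)) (Fin (2 * k + 1)) ℝ := fun i j =>
  if i = j then
    ((∑ w : Fin (2 * k + 1),
        if |((i : ℤ) - k) - ((w : ℤ) - k)| = 1 then γ ((i : ℤ) - k) ((w : ℤ) - k) else 0)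
      + if ((i : ℤ) - k) = 0 then u else 0)
  else if |((i : ℤ) - k) - ((j : ℤ) - k)| = 1 then -γ ((i : ℤ) - k) ((j : ℤ) - k) else 0

/-- The operator `H = L_γ + u δ₀` as a complex matrix on `ℂ^{2k+1}`. -/
noncomputable def pathH (k : ℕ) (γ : ℤ → ℤ → ℝ) (u : ℝ) :
    Matrix (Fin (2 * k + 1)) (Fin (2 * k + 1)) ℂ :=
  (pathHR k γ u).map (fun x => (x : ℂ))

lemma pathH_isHermitian (k : ℕ) (γ : ℤ → ℤ → ℝ) (u : ℝ)
    (hsym : ∀ v w : ℤ, γ v w = γ w v) : (pathH k γ u).IsHermitian := by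
  have hAR : (pathHR k γ u)ᵀ = pathHR k γ u := by
    ext i j
    unfold pathHR
    by_cases h : i = j
    · subst h; rfl
    · change (if j = i then _ else _) = (if i = j then _ else _)
      simp only [if_neg h, if_neg (Ne.symm h)]
      rw [abs_sub_comm, hsym]
  unfold Matrix.IsHermitian pathH
  rw [← Matrix.conjTranspose_map _ (by intro x; simp [Complex.conj_ofReal]),
    show (pathHR k γ u)ᴴ = (pathHR k γ u)ᵀ from rfl, hAR]

/-- Sorted (increasing) enumeration of the eigenvalues of a Hermitian matrix. -/
noncomputable def sortedEig {n : ℕ} {A : Matrix (Fin n) (Fin n) ℂ} (hA : A.IsHermitian) :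
    Fin n → ℝ :=
  hA.eigenvalues ∘ Tuple.sort hA.eigenvalues

namespace Matrix

variable {K : Type*} [Field K] {n : ℕ}

-- Reading row `m` of the eigenvalue equation, the superdiagonal entry is the only one
-- that can multiply an entry of `v` not already known to vanish.
theorem eq_zero_of_mulVec_eq_smul_of_apply_zero (A : Matrix (Fin (n + 1)) (Fin (n + 1)) K)
    (hupper : ∀ i j : Fin (n + 1), (i : ℕ) + 1 < j → A i j = 0)
    (hsuper : ∀ i j : Fin (n + 1), (j : ℕ) = i + 1 → A i j ≠ 0)
    {μ : K} {v : Fin (n + 1) → K} (hv : A *ᵥ v = μ • v) (h0 : v 0 = 0) : v = 0 := by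
  suffices h : ∀ m, ∀ j : Fin (n + 1), (j : ℕ) ≤ m → v j = 0 from
    funext fun j => h j j le_rfl
  intro m
  induction m with
  | zero => intro j hj; rwa [show j = 0 from Fin.ext (Nat.le_zero.mp hj)]
  | succ m ih =>
    intro j hj
    rcases Nat.le_succ_iff.mp hj with hjm | hjm
    · exact ih j hjm
    set i : Fin (n + 1) := ⟨m, by omega⟩
    have hrow : A i j * v j = 0 := by
      have hi := congrFun hv i
      rw [Pi.smul_apply, ih i le_rfl, smul_zero, mulVec, dotProduct,
        Finset.sum_eq_single j] at hi
      · exact hi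
      · intro l _ hlj
        have hlj : (l : ℕ) ≠ j := Fin.val_ne_of_ne hlj
        rcases le_or_gt (l : ℕ) m with hl | hl
        · rw [ih l hl, mul_zero]
        · rw [hupper i l (by simp only [i]; omega), zero_mul]
      · simp
    exact (mul_eq_zero.mp hrow).resolve_left (hsuper i j hjm)

theorem eq_smul_of_mulVec_eq_smul (A : Matrix (Fin (n + 1)) (Fin (n + 1)) K)
    (hupper : ∀ i j : Fin (n + 1), (i : ℕ) + 1 < j → A i j = 0)
    (hsuper : ∀ i j : Fin (n + 1), (j : ℕ) = i + 1 → A i j ≠ 0)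
    {μ : K} {f g : Fin (n + 1) → K} (hf : A *ᵥ f = μ • f) (hg : A *ᵥ g = μ • g)
    (hf0 : f 0 ≠ 0) : g = (g 0 / f 0) • f := by
  refine sub_eq_zero.mp (A.eq_zero_of_mulVec_eq_smul_of_apply_zero hupper hsuper
    (μ := μ) ?_ (by simp [hf0]))
  rw [mulVec_sub, mulVec_smul, hf, hg, smul_sub, smul_comm]

theorem comp_rev_eq_of_mulVec_eq_smul [LinearOrder K] [IsStrictOrderedRing K]
    (A : Matrix (Fin (n + 1)) (Fin (n + 1)) K)
    (hupper : ∀ i j : Fin (n + 1), (i : ℕ) + 1 < j → A i j = 0)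
    (hsuper : ∀ i j : Fin (n + 1), (j : ℕ) = i + 1 → A i j ≠ 0)
    (hrev : A.submatrix Fin.rev Fin.rev = A)
    {μ : K} {f : Fin (n + 1) → K} (hf : A *ᵥ f = μ • f) (hpos : ∀ i, 0 < f i) :
    f ∘ Fin.rev = f := by
  have hf_rev : A *ᵥ (f ∘ Fin.rev) = μ • (f ∘ Fin.rev) := by
    have h := submatrix_mulVec_equiv A (f ∘ Fin.rev) Fin.rev Fin.revPerm
    have hA : A.submatrix Fin.rev Fin.revPerm = A := hrev
    have hff : (f ∘ Fin.rev) ∘ Fin.revPerm.symm = f := funext fun i => by simp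
    rw [hA, hff, hf] at h
    exact h
  set c := f (Fin.rev 0) / f 0
  have hc : f ∘ Fin.rev = c • f :=
    A.eq_smul_of_mulVec_eq_smul hupper hsuper hf hf_rev (hpos 0).ne'
  have hc_pos : 0 < c := div_pos (hpos _) (hpos 0)
  have hc_sq : c * c = 1 := by
    have h0 : f 0 = c * (c * f 0) := by
      have h_rev0 : f (Fin.rev 0) = c * f 0 := congrFun hc 0
      have h_revrev0 : f (Fin.rev (Fin.rev 0)) = c * f (Fin.rev 0) := congrFun hc (Fin.rev 0)
      rwa [Fin.rev_rev, h_rev0] at h_revrev0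
    nlinarith [hpos 0]
  have hc_one : c = 1 := by nlinarith
  rw [hc, hc_one, one_smul]

theorem mulVec_eq_smul_of_map_ofReal {m : Type*} [Fintype m] (A : Matrix m m ℝ) {μ : ℝ}
    {f : m → ℝ} (h : A.map ((↑) : ℝ → ℂ) *ᵥ (fun i => (f i : ℂ)) = (μ : ℂ) • fun i => (f i : ℂ)) :
    A *ᵥ f = μ • f := by
  ext i
  have hi := congrFun h i
  simp only [mulVec, dotProduct, map_apply, Pi.smul_apply, smul_eq_mul] at hi
  exact_mod_cast hi

end Matrix

section pathHR

variable {k : ℕ} {γ : ℤ → ℤ → ℝ} {u : ℝ}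

theorem pathHR_apply_eq_zero_of_lt {i j : Fin (2 * k + 1)} (hij : (i : ℕ) + 1 < j) :
    pathHR k γ u i j = 0 := by
  rw [pathHR, if_neg (Fin.ne_of_val_ne (by omega)), if_neg]
  rw [abs_eq zero_le_one]
  omega

theorem pathHR_apply_ne_zero_of_eq_succ (hpos : ∀ v w : ℤ, |v - w| = 1 → 0 < γ v w)
    {i j : Fin (2 * k + 1)} (hij : (j : ℕ) = i + 1) : pathHR k γ u i j ≠ 0 := by
  have hadj : |((i : ℤ) - k) - ((j : ℤ) - k)| = 1 := by
    rw [abs_eq zero_le_one]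
    omega
  rw [pathHR, if_neg (Fin.ne_of_val_ne (by omega)), if_pos hadj, neg_ne_zero]
  exact (hpos _ _ hadj).ne'

theorem Fin.natCast_rev_sub_eq_neg (i : Fin (2 * k + 1)) :
    ((i.rev : ℕ) : ℤ) - k = -((i : ℤ) - k) := by
  rw [Fin.val_rev]
  omega

theorem pathHR_submatrix_rev (hsym2 : ∀ v w : ℤ, γ v w = γ (-v) (-w)) :
    (pathHR k γ u).submatrix Fin.rev Fin.rev = pathHR k γ u := by
  have habs : ∀ a b : ℤ, |-a - -b| = |a - b| := fun a b => by rw [neg_sub_neg, abs_sub_comm]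
  ext i j
  by_cases hij : i = j
  · subst hij
    simp only [submatrix_apply, pathHR, if_true]
    rw [← Equiv.sum_comp Fin.revPerm]
    simp only [Fin.revPerm_apply, Fin.natCast_rev_sub_eq_neg, habs, ← hsym2, neg_eq_zero]
  · simp only [submatrix_apply, pathHR, Fin.rev_inj, if_neg hij, Fin.natCast_rev_sub_eq_neg,
      habs, ← hsym2]

end pathHR

/-- A positive ground state eigenvector of `H = L_γ + u δ₀` with double-symmetric weights
is symmetric: `u₀(v) = u₀(-v)` (on `Fin (2k+1)`, negation of the vertex is `Fin.rev`). -/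
theorem ground_state_symmetric (k : ℕ) (γ : ℤ → ℤ → ℝ) (u : ℝ)
    (hpos : ∀ v w : ℤ, |v - w| = 1 → 0 < γ v w)
    (hsym : ∀ v w : ℤ, γ v w = γ w v)
    (hsym2 : ∀ v w : ℤ, γ v w = γ (-v) (-w))
    (u₀ : Fin (2 * k + 1) → ℝ) (hposgs : ∀ i, 0 < u₀ i)
    (heig : (pathH k γ u).mulVec (fun i => (u₀ i : ℂ)) =
      ((sortedEig (pathH_isHermitian k γ u hsym) ⟨0, by omega⟩ : ℝ) : ℂ) •
        (fun i => (u₀ i : ℂ))) :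
    ∀ i : Fin (2 * k + 1), u₀ i = u₀ i.rev := by
  have hsymm : u₀ ∘ Fin.rev = u₀ :=
    (pathHR k γ u).comp_rev_eq_of_mulVec_eq_smul (fun _ _ => pathHR_apply_eq_zero_of_lt)
      (fun _ _ => pathHR_apply_ne_zero_of_eq_succ hpos) (pathHR_submatrix_rev hsym2)
      ((pathHR k γ u).mulVec_eq_smul_of_map_ofReal heig) hposgs
  exact fun i => (congrFun hsymm i).symm
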